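/- Let C be a 2-club cover of a graph G, let y be a cut vertex with a component A of G − y such that A ∪ {y} induces a 2-club, and let B = V(G) ∖ (A ∪ {y}). For every set S in C, the induced subgraph G[S ∩ (B ∪ {y})] is a 2-club. -/

import Mathlib

open SimpleGraph

/-- `H` is obtained from `G` by splitting vertex `v` into two copies `v` and `v'`
(where `v'` was an isolated vertex), with `N(v₁) ∪ N(v₂) = N(v)`. -/
def IsSplitAt {V : Type*} (v v' : V) (G H : SimpleGraph V) : Prop :=
  v ≠ v' ∧ G.neighborSet v' = ∅ ∧ ¬ H.Adj v v' ∧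
  (∀ x y : V, x ≠ v → x ≠ v' → y ≠ v → y ≠ v' → (H.Adj x y ↔ G.Adj x y)) ∧
  (∀ x : V, x ≠ v → x ≠ v' → ((H.Adj v x ∨ H.Adj v' x) ↔ G.Adj v x))

/-- `H` is obtained from `G` by a single vertex split. -/
def IsSplit {V : Type*} (G H : SimpleGraph V) : Prop :=
  ∃ v v', IsSplitAt v v' G H

/-- `H` is obtained from `G` by deleting a single (existing) edge. -/
def IsEdgeDeletion {V : Type*} (G H : SimpleGraph V) : Prop :=
  ∃ u v : V, G.Adj u v ∧ H = G.deleteEdges {s(u, v)}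

/-- Editing operations: edge deletion, or vertex split (recording the split vertex
and the name of the new copy). -/
inductive Op where
  | del : ℕ → ℕ → Op
  | split : ℕ → ℕ → Op

/-- Semantics of one operation. -/
def OpApplies : Op → SimpleGraph ℕ → SimpleGraph ℕ → Prop
  | Op.del u v, G, H => G.Adj u v ∧ H = G.deleteEdges {s(u, v)}
  | Op.split v v', G, H => IsSplitAt v v' G H

/-- Applying a list of operations in order. -/
def OpsApply : List Op → SimpleGraph ℕ → SimpleGraph ℕ → Prop
  | [], G, H => H = G
  | o :: l, G, H => ∃ G', OpApplies o G G' ∧ OpsApply l G' H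

def IsSplitOp : Op → Prop
  | Op.split _ _ => True
  | Op.del _ _ => False

/-- The set of vertices on which a split is performed in the list of operations. -/
def splitVerts (l : List Op) : Set ℕ := {v | ∃ v', Op.split v v' ∈ l}

/-- `G` is a disjoint union of 2-clubs: within each connected component all
distances are at most 2. -/
def Is2ClubGraph (G : SimpleGraph ℕ) : Prop :=
  ∀ u v : ℕ, G.Reachable u v → G.dist u v ≤ 2

/-- Minimum number of vertex splits turning `G` into a disjoint union of 2-clubs. -/
noncomputable def twoCcvs (G : SimpleGraph ℕ) : ℕ :=
  sInf {k | ∃ l H, l.length = k ∧ (∀ o ∈ l, IsSplitOp o) ∧ OpsApply l G H ∧ Is2ClubGraph H}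

/-- Minimum number of edge deletions and vertex splits turning `G` into a
disjoint union of 2-clubs. -/
noncomputable def twoCcedvs (G : SimpleGraph ℕ) : ℕ :=
  sInf {k | ∃ l H, l.length = k ∧ OpsApply l G H ∧ Is2ClubGraph H}

/-- The subgraph of `G` induced on `s` (kept on the same vertex type, all
vertices outside `s` becoming isolated). -/
def inducedOn (G : SimpleGraph ℕ) (s : Set ℕ) : SimpleGraph ℕ where
  Adj x y := G.Adj x y ∧ x ∈ s ∧ y ∈ s
  symm := ⟨fun x y h => ⟨h.1.symm, h.2.2, h.2.1⟩⟩
  loopless := ⟨fun x h => G.irrefl h.1⟩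

/-- The set `s` induces a 2-club in `G` (connected, diameter at most 2). -/
def Inducing2Club (G : SimpleGraph ℕ) (s : Set ℕ) : Prop :=
  ∀ u ∈ s, ∀ v ∈ s, (inducedOn G s).Reachable u v ∧ (inducedOn G s).dist u v ≤ 2

/-- The path with vertices `0, 1, …, m` (length `m`). -/
def pathG (m : ℕ) : SimpleGraph ℕ :=
  SimpleGraph.fromRel (fun i j => j = i + 1 ∧ j ≤ m)

/-- The cycle with vertices `0, 1, …, n-1`. -/
def cycleG (n : ℕ) : SimpleGraph ℕ :=
  SimpleGraph.fromRel (fun i j => i < n ∧ j = (i + 1) % n)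

/-- Total cost of a 2-club cover: each vertex pays (multiplicity − 1), each edge
not contained in some set of the cover pays 1. -/
noncomputable def coverCost (G : SimpleGraph ℕ) (C : Finset (Finset ℕ)) : ℕ :=
  (∑ v ∈ C.sup id, ((C.filter (fun S => v ∈ S)).card - 1)) +
    Set.ncard {e : Sym2 ℕ | e ∈ G.edgeSet ∧ ¬ ∃ S ∈ C, ∀ x ∈ e, x ∈ S}

/-- `C` is a 2-club cover of `G`: it covers the vertices of `G` and each set
induces a 2-club. -/
def Is2ClubCover (G : SimpleGraph ℕ) (C : Finset (Finset ℕ)) : Prop :=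
  (∀ v ∈ G.support, ∃ S ∈ C, v ∈ S) ∧ ∀ S ∈ C, Inducing2Club G (↑S : Set ℕ)

lemma inducing2Club_iff {G : SimpleGraph ℕ} {s : Set ℕ} :
    Inducing2Club G s ↔
      ∀ u ∈ s, ∀ v ∈ s, u ≠ v → G.Adj u v ∨ ∃ m ∈ s, G.Adj u m ∧ G.Adj m v := by
  constructor
  · intro hs u hu v hv huv
    obtain ⟨p, -, hp⟩ := (hs u hu v hv).1.exists_path_of_dist
    have hlen : p.length ≤ 2 := hp ▸ (hs u hu v hv).2
    match p, hlen with
    | .nil, _ => exact absurd rfl huv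
    | .cons h .nil, _ => exact .inl h.1
    | .cons h (.cons h' .nil), _ => exact .inr ⟨_, h.2.2, h.1, h'.1⟩
    | .cons _ (.cons _ (.cons _ _)), hlen => simp at hlen
  · intro hs u hu v hv
    by_cases huv : u = v
    · subst huv
      simp
    rcases hs u hu v hv huv with h | ⟨m, hm, hum, hmv⟩
    · have e : (inducedOn G s).Adj u v := ⟨h, hu, hv⟩
      exact ⟨e.reachable, (dist_le e.toWalk).trans (by simp)⟩
    · have e₁ : (inducedOn G s).Adj u m := ⟨hum, hu, hm⟩
      have e₂ : (inducedOn G s).Adj m v := ⟨hmv, hm, hv⟩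
      exact ⟨e₁.reachable.trans e₂.reachable, (dist_le (e₁.toWalk.concat e₂)).trans (by simp)⟩

lemma Inducing2Club.inter {G : SimpleGraph ℕ} {S T : Set ℕ} (hS : Inducing2Club G S)
    (hT : ∀ u ∈ S ∩ T, ∀ v ∈ S ∩ T, ∀ m ∈ S, u ≠ v → G.Adj u m → G.Adj m v → m ∈ T) :
    Inducing2Club G (S ∩ T) := by
  rw [inducing2Club_iff] at hS ⊢
  intro u hu v hv huv
  rcases hS u hu.1 v hv.1 huv with h | ⟨m, hm, hum, hmv⟩
  · exact .inl h
  · exact .inr ⟨m, ⟨hm, hT u hu v hv m hm huv hum hmv⟩, hum, hmv⟩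

lemma mem_of_inducedOn_reachable {G : SimpleGraph ℕ} {s : Set ℕ} {a x : ℕ} (ha : a ∈ s)
    (h : (inducedOn G s).Reachable a x) : x ∈ s := by
  obtain ⟨p⟩ := h.symm
  cases p with
  | nil => exact ha
  | cons e _ => exact e.2.1

lemma inducedOn_reachable_of_adj {G : SimpleGraph ℕ} {s : Set ℕ} {a m z : ℕ} (ha : a ∈ s)
    (hm : (inducedOn G s).Reachable a m) (hmz : G.Adj m z) (hz : z ∈ s) :
    (inducedOn G s).Reachable a z :=
  hm.trans (Adj.reachable ⟨hmz, mem_of_inducedOn_reachable ha hm, hz⟩)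

theorem stmt9_general (G : SimpleGraph ℕ) (y : ℕ) (A : Set ℕ)
    (hA : ∃ a ∈ A, a ≠ y ∧ A = {x | (inducedOn G {z | z ≠ y}).Reachable a x})
    (C : Finset (Finset ℕ)) (hC : Is2ClubCover G C) :
    ∀ S ∈ C, Inducing2Club G ((↑S : Set ℕ) ∩ ({x | x ∉ A ∧ x ≠ y} ∪ {y})) := by
  obtain ⟨a, -, hay, rfl⟩ := hA
  intro S hS
  refine (hC.2 S hS).inter fun u hu v hv m _ huv hum hmv => ?_
  by_contra hmB
  have hmA : (inducedOn G {z | z ≠ y}).Reachable a m := by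
    simp only [Set.mem_union, Set.mem_ofPred_eq, Set.mem_singleton_iff] at hmB
    tauto
  -- `y` separates the component of `a` from the rest, so the common neighbour `m` forces `u = y = v`.
  have eq_y : ∀ w, (¬(inducedOn G {z | z ≠ y}).Reachable a w ∧ w ≠ y) ∨ w = y →
      G.Adj m w → w = y := by
    rintro w (⟨hwA, hwy⟩ | rfl) hmw
    · exact absurd (inducedOn_reachable_of_adj hay hmA hmw hwy) hwA
    · rfl
  exact huv ((eq_y u hu.2 hum.symm).trans (eq_y v hv.2 hmv).symm)

theorem stmt9 (G : SimpleGraph ℕ) (y : ℕ) (A : Set ℕ)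
    (hA : ∃ a ∈ A, a ≠ y ∧ A = {x | (inducedOn G {z | z ≠ y}).Reachable a x})
    (h2club : Inducing2Club G (A ∪ {y}))
    (C : Finset (Finset ℕ)) (hC : Is2ClubCover G C) :
    ∀ S ∈ C, Inducing2Club G ((↑S : Set ℕ) ∩ ({x | x ∉ A ∧ x ≠ y} ∪ {y})) :=
  stmt9_general G y A hA C hC
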